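/- Let v ≥ 2, k ≥ 0 and d ≥ 0 be integers, and let Λ be a finite subgroup of (ℝ/ℤ)^{d+1} which is non-pyramidal and has δ-polynomial 1 + t^{k+1} + t^{2(k+1)} + ⋯ + t^{(v−1)(k+1)}. Then d ≤ 4(v−1)(k+1) − 2. -/

import Mathlib

open scoped BigOperators

local instance : Fact ((0:ℝ) < 1) := ⟨one_pos⟩

noncomputable def fracR (x : AddCircle (1:ℝ)) : ℝ :=
  ((AddCircle.equivIco 1 0) x : ℝ)

noncomputable def ht {ι : Type*} [Fintype ι] (x : ι → AddCircle (1:ℝ)) : ℝ :=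
  ∑ i, fracR (x i)

/-- `Λ` has δ-polynomial `1 + t^step + t^(2*step) + ⋯ + t^((v-1)*step)` :
the height map is a bijection from `Λ` onto `{j*step : 0 ≤ j ≤ v-1}`. -/
def HasDeltaPoly {ι : Type*} [Fintype ι] (v step : ℕ)
    (Λ : Set (ι → AddCircle (1:ℝ))) : Prop :=
  Set.BijOn ht Λ {y : ℝ | ∃ j : ℕ, j < v ∧ y = (j : ℝ) * (step : ℝ)}

def NonPyramidal {ι : Type*} [Fintype ι] (Λ : Set (ι → AddCircle (1:ℝ))) : Prop :=
  ∀ i : ι, ∃ x ∈ Λ, x i ≠ 0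
/-!
Pairing `λ` with `-λ` and using `frac(x) + frac(-x) = 1` for `x ≠ 0`, the coordinate sum
`∑_{λ ∈ Λ} frac(λᵢ)` is half the number of `λ ∈ Λ` with `λᵢ ≠ 0`. Non-pyramidality makes the
kernel of `λ ↦ λᵢ` a proper subgroup of `Λ`, so that number is at least `|Λ| / 2`. Summing over
the `d + 1` coordinates gives `(d + 1) |Λ| ≤ 4 ∑_{λ ∈ Λ} ht(λ)`, while the δ-polynomial gives
`|Λ| = v` and `∑_{λ ∈ Λ} ht(λ) = (k + 1) v (v - 1) / 2`. Hence `d + 1 ≤ 2 (k + 1)(v - 1)`.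
-/

open Finset

lemma fracR_coe (a : ℝ) : fracR a = Int.fract a := by
  simp [fracR, AddCircle.coe_equivIco_mk_apply]

lemma fracR_eq_zero_iff {x : AddCircle (1:ℝ)} : fracR x = 0 ↔ x = 0 := by
  induction x using QuotientAddGroup.induction_on with
  | H a =>
    rw [fracR_coe, Int.fract_eq_iff, AddCircle.coe_eq_zero_iff]
    simp [eq_comm, zsmul_eq_mul]

lemma fracR_add_fracR_neg {x : AddCircle (1:ℝ)} (hx : x ≠ 0) : fracR x + fracR (-x) = 1 := by
  induction x using QuotientAddGroup.induction_on with
  | H a =>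
    have ha : Int.fract a ≠ 0 := by rwa [← fracR_coe, Ne, fracR_eq_zero_iff]
    rw [← AddCircle.coe_neg, fracR_coe, fracR_coe, Int.fract_neg ha]
    ring

section FiniteSubgroup

variable {G : Type*} [AddCommGroup G] (f : G →+ AddCircle (1:ℝ)) {H : AddSubgroup G}

lemma two_mul_sum_fracR_eq_card_filter_ne_zero (hH : (H : Set G).Finite) :
    2 * ∑ x ∈ hH.toFinset, fracR (f x) = #{x ∈ hH.toFinset | f x ≠ 0} := by
  have sum_fracR_neg : ∑ x ∈ hH.toFinset, fracR (f (-x)) = ∑ x ∈ hH.toFinset, fracR (f x) :=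
    sum_nbij' Neg.neg Neg.neg (by simp) (by simp) (by simp) (by simp) (fun _ _ => rfl)
  calc 2 * ∑ x ∈ hH.toFinset, fracR (f x)
      = ∑ x ∈ hH.toFinset, (fracR (f x) + fracR (-f x)) := by
        rw [sum_add_distrib, two_mul]
        simp only [← map_neg, sum_fracR_neg]
    _ = ∑ x ∈ hH.toFinset, if f x ≠ 0 then (1:ℝ) else 0 := by
        refine sum_congr rfl fun x _ => ?_
        split_ifs with hx
        · exact fracR_add_fracR_neg hx
        · simp [not_not.mp hx, fracR_eq_zero_iff]
    _ = #{x ∈ hH.toFinset | f x ≠ 0} := by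
        rw [sum_boole]

lemma card_le_two_mul_card_filter_ne_zero (hH : (H : Set G).Finite) (hf : ∃ w ∈ H, f w ≠ 0) :
    #hH.toFinset ≤ 2 * #{x ∈ hH.toFinset | f x ≠ 0} := by
  obtain ⟨w, hwH, hw⟩ := hf
  have card_ker_le : #{x ∈ hH.toFinset | ¬f x ≠ 0} ≤ #{x ∈ hH.toFinset | f x ≠ 0} :=
    card_le_card_of_injOn (· + w)
      (fun x hx => by simp_all [H.add_mem _ hwH])
      (fun _ _ _ _ => add_right_cancel)
  have := card_filter_add_card_filter_not (s := hH.toFinset) (fun x => f x ≠ 0)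
  omega

lemma card_le_four_mul_sum_fracR (hH : (H : Set G).Finite) (hf : ∃ w ∈ H, f w ≠ 0) :
    (#hH.toFinset : ℝ) ≤ 4 * ∑ x ∈ hH.toFinset, fracR (f x) := by
  have h := card_le_two_mul_card_filter_ne_zero f hH hf
  have h' := two_mul_sum_fracR_eq_card_filter_ne_zero f hH
  have : (#hH.toFinset : ℝ) ≤ 2 * #{x ∈ hH.toFinset | f x ≠ 0} := by exact_mod_cast h
  linarith

end FiniteSubgroup

lemma card_mul_card_le_four_mul_sum_ht {ι : Type*} [Fintype ι]
    {Λ : AddSubgroup (ι → AddCircle (1:ℝ))} (hΛ : (Λ : Set (ι → AddCircle (1:ℝ))).Finite)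
    (hnp : NonPyramidal (Λ : Set (ι → AddCircle (1:ℝ)))) :
    (Fintype.card ι * #hΛ.toFinset : ℝ) ≤ 4 * ∑ x ∈ hΛ.toFinset, ht x :=
  calc (Fintype.card ι * #hΛ.toFinset : ℝ)
      = ∑ _i : ι, (#hΛ.toFinset : ℝ) := by simp
    _ ≤ ∑ i : ι, 4 * ∑ x ∈ hΛ.toFinset, fracR (x i) :=
        sum_le_sum fun i _ => card_le_four_mul_sum_fracR (Pi.evalAddMonoidHom _ i) hΛ (hnp i)
    _ = 4 * ∑ x ∈ hΛ.toFinset, ht x := by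
        rw [← mul_sum, sum_comm]
        rfl

section DeltaPoly

variable {ι : Type*} [Fintype ι] {v step : ℕ} {Λ : Set (ι → AddCircle (1:ℝ))}

lemma HasDeltaPoly.bijOn_toFinset (hΛ : HasDeltaPoly v step Λ) (hfin : Λ.Finite) :
    Set.BijOn ht (hfin.toFinset : Set (ι → AddCircle (1:ℝ)))
      ↑((range v).image fun j : ℕ => (j : ℝ) * step) := by
  rw [hfin.coe_toFinset]
  unfold HasDeltaPoly at hΛ
  convert hΛ
  ext y
  simp [eq_comm]

lemma injective_natCast_mul {step : ℕ} (hstep : 0 < step) :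
    Function.Injective fun j : ℕ => (j : ℝ) * step :=
  (mul_left_injective₀ (by positivity)).comp Nat.cast_injective

lemma HasDeltaPoly.card_toFinset (hΛ : HasDeltaPoly v step Λ) (hfin : Λ.Finite)
    (hstep : 0 < step) : #hfin.toFinset = v := by
  have h := hΛ.bijOn_toFinset hfin
  rw [card_nbij ht h.mapsTo h.injOn h.surjOn,
    card_image_of_injective _ (injective_natCast_mul hstep), card_range]

lemma HasDeltaPoly.sum_ht_mul_two (hΛ : HasDeltaPoly v step Λ) (hfin : Λ.Finite)
    (hstep : 0 < step) : (∑ x ∈ hfin.toFinset, ht x) * 2 = ((v * (v - 1) * step : ℕ) : ℝ) := by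
  have h := hΛ.bijOn_toFinset hfin
  rw [sum_nbij (g := fun y : ℝ => y) ht h.mapsTo h.injOn h.surjOn (fun _ _ => rfl),
    sum_image fun a _ b _ hab => injective_natCast_mul hstep hab, ← sum_mul, mul_right_comm,
    ← sum_range_id_mul_two]
  push_cast
  ring

end DeltaPoly

theorem stmt_2_general (v k d : ℕ)
    (Λ : AddSubgroup (Fin (d+1) → AddCircle (1:ℝ)))
    (hfin : (Λ : Set (Fin (d+1) → AddCircle (1:ℝ))).Finite)
    (hnp : NonPyramidal (Λ : Set (Fin (d+1) → AddCircle (1:ℝ))))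
    (hΛ : HasDeltaPoly v (k+1) (Λ : Set (Fin (d+1) → AddCircle (1:ℝ)))) :
    d ≤ 4 * (v-1) * (k+1) - 2 := by
  have hcard := hΛ.card_toFinset hfin k.succ_pos
  have hsum := hΛ.sum_ht_mul_two hfin k.succ_pos
  have hbound := card_mul_card_le_four_mul_sum_ht hfin hnp
  rw [hcard, Fintype.card_fin] at hbound
  have hv : 0 < v := hcard ▸ card_pos.2 ⟨0, by simp⟩
  have hdv : (d + 1) * v ≤ v * (2 * ((v - 1) * (k + 1))) := by
    have : (((d + 1) * v : ℕ) : ℝ) ≤ ((v * (2 * ((v - 1) * (k + 1))) : ℕ) : ℝ) := by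
      push_cast at hbound hsum ⊢
      linarith
    exact_mod_cast this
  have hd := Nat.le_of_mul_le_mul_left (mul_comm (d + 1) v ▸ hdv) hv
  rw [mul_assoc]
  generalize (v - 1) * (k + 1) = m at hd ⊢
  omega

theorem stmt_2 (v k d : ℕ) (hv : 2 ≤ v)
    (Λ : AddSubgroup (Fin (d+1) → AddCircle (1:ℝ)))
    (hfin : (Λ : Set (Fin (d+1) → AddCircle (1:ℝ))).Finite)
    (hnp : NonPyramidal (Λ : Set (Fin (d+1) → AddCircle (1:ℝ))))
    (hΛ : HasDeltaPoly v (k+1) (Λ : Set (Fin (d+1) → AddCircle (1:ℝ)))) :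
    d ≤ 4 * (v-1) * (k+1) - 2 :=
  stmt_2_general v k d Λ hfin hnp hΛ
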